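/- Let X ∈ ℝ^{n×p}, y ∈ ℝ^n, λ ≥ 0, μ > 0, and let d ∈ ℝ^n with 0 < d_i < 1/2 for all i. Suppose the block matrix Σ̃_d = [[XᵀX + λI_p, −Xᵀ], [−X, I_n − 2Diag(d)]] is positive semidefinite. Then the function β ↦ (λ/2)‖β‖₂² + ∑_{i=1}^n φ̄(y_i − x_iᵀβ; d_i) is convex on ℝ^p. -/

import Mathlib

/-!
With t = √(μ/d) and δ = 2√(μd) = 2dt, adding (d/(1-2d)) r² to φ̄(r; d) gives
(1-2d)⁻¹ (huber_δ(r) + d · max(|r| - t, 0)²), a convex function of r. Writing w = Xβ, the objective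
therefore splits as ∑ᵢ [φ̄(yᵢ - wᵢ; dᵢ) + dᵢ/(1-2dᵢ) wᵢ²], convex termwise, plus
(λ/2)‖β‖² - ∑ᵢ dᵢ/(1-2dᵢ) wᵢ² = ½ βᵀSβ, where S = XᵀX + λI - Xᵀ(I - 2 Diag d)⁻¹X is the Schur
complement of the positive definite block I - 2 Diag d of Σ̃_d, hence positive semidefinite.
-/

open Matrix

/-- The perspective-relaxation loss φ̄(r; d) for parameters μ > 0, d ∈ (0,1/2). -/
noncomputable def phiBar (mu d r : ℝ) : ℝ :=
  if |r| ≤ 2 * Real.sqrt (mu * d) then (1/2) * r^2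
  else if |r| < Real.sqrt (mu / d) then
    (-(d * r^2) + 2 * Real.sqrt (mu * d) * |r| - 2 * mu * d) / (1 - 2*d)
  else mu

theorem ConvexOn.fun_sum {𝕜 E β ι : Type*} [Semiring 𝕜] [PartialOrder 𝕜] [AddCommMonoid E]
    [AddCommMonoid β] [PartialOrder β] [IsOrderedAddMonoid β] [SMul 𝕜 E] [Module 𝕜 β]
    {s : Set E} (hs : Convex 𝕜 s) (t : Finset ι) {f : ι → E → β}
    (hf : ∀ i ∈ t, ConvexOn 𝕜 s (f i)) : ConvexOn 𝕜 s fun x => ∑ i ∈ t, f i x := by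
  classical
  induction t using Finset.induction_on with
  | empty => simpa using convexOn_const 0 hs
  | insert i t hi ih =>
    simp_rw [Finset.sum_insert hi]
    exact (hf i (Finset.mem_insert_self i t)).add
      (ih fun j hj => hf j (Finset.mem_insert_of_mem hj))

section OrderedRing

variable {𝕜 E : Type*} [CommRing 𝕜] [PartialOrder 𝕜] [IsOrderedRing 𝕜]
  [AddCommGroup E] [Module 𝕜 E]

theorem convexOn_univ_of_forall_exists_subgradient {f : E → 𝕜}
    (h : ∀ x, ∃ g : E →ₗ[𝕜] 𝕜, ∀ z, f x + g (z - x) ≤ f z) : ConvexOn 𝕜 Set.univ f := by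
  refine ⟨convex_univ, fun x _ z _ a b ha hb hab => ?_⟩
  obtain ⟨g, hg⟩ := h (a • x + b • z)
  have hx := mul_le_mul_of_nonneg_left (hg x) ha
  have hz := mul_le_mul_of_nonneg_left (hg z) hb
  have hcomb : a * g (x - (a • x + b • z)) + b * g (z - (a • x + b • z)) = 0 := by
    simp only [map_sub, map_add, map_smul, smul_eq_mul]
    linear_combination -(a * g x + b * g z) * hab
  simp only [smul_eq_mul]
  linear_combination hx + hz - hcomb - f (a • x + b • z) * hab

theorem LinearMap.convexOn_apply_self {B : E →ₗ[𝕜] E →ₗ[𝕜] 𝕜} (hB : ∀ v, 0 ≤ B v v) :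
    ConvexOn 𝕜 Set.univ fun v => B v v := by
  refine ⟨convex_univ, fun x _ z _ a b ha hb hab => ?_⟩
  have hxz := mul_nonneg (mul_nonneg ha hb) (hB (x - z))
  simp only [map_add, map_sub, map_smul, LinearMap.add_apply, LinearMap.sub_apply,
    LinearMap.smul_apply, smul_eq_mul] at hxz ⊢
  linear_combination hxz + (a * B x x + b * B z z) * hab

end OrderedRing

theorem Matrix.PosSemidef.convexOn_dotProduct_mulVec {n : Type*} [Fintype n] [DecidableEq n]
    {M : Matrix n n ℝ} (hM : M.PosSemidef) : ConvexOn ℝ Set.univ fun v => v ⬝ᵥ M *ᵥ v := by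
  simpa only [toLinearMap₂'_apply'] using
    LinearMap.convexOn_apply_self (B := toLinearMap₂' ℝ M) fun v => by
      simpa [toLinearMap₂'_apply'] using hM.dotProduct_mulVec_nonneg v

noncomputable def huber (δ r : ℝ) : ℝ :=
  if |r| ≤ δ then r ^ 2 / 2 else δ * |r| - δ ^ 2 / 2

theorem mul_sub_sq_div_two_le_huber {δ s : ℝ} (hs : |s| ≤ δ) (r : ℝ) :
    s * r - s ^ 2 / 2 ≤ huber δ r := by
  unfold huber
  split_ifs with hr
  · nlinarith [sq_nonneg (r - s)]
  · have : s * r ≤ |s| * |r| := by rw [← abs_mul]; exact le_abs_self _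
    have : (δ - |s|) * δ ≤ (δ - |s|) * |r| :=
      mul_le_mul_of_nonneg_left (not_le.1 hr).le (sub_nonneg.2 hs)
    nlinarith [sq_nonneg (δ - |s|), sq_abs s]

theorem huber_eq_clamp_mul_sub {δ : ℝ} (hδ : 0 ≤ δ) (r : ℝ) :
    huber δ r = max (-δ) (min r δ) * r - max (-δ) (min r δ) ^ 2 / 2 := by
  unfold huber
  split_ifs with hr
  · rw [abs_le] at hr
    rw [min_eq_left hr.2, max_eq_right hr.1]; ring
  · rcases le_or_gt 0 r with h | h
    · rw [abs_of_nonneg h] at hr ⊢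
      rw [min_eq_right (by linarith), max_eq_right (by linarith)]
    · rw [abs_of_neg h] at hr ⊢
      rw [min_eq_left (by linarith), max_eq_left (by linarith)]; ring

/-- `huber δ r` is the maximum of `s * r - s ^ 2 / 2` over `|s| ≤ δ`, attained at the clamp of `r`
to `[-δ, δ]`; that clamp is a subgradient. -/
theorem convexOn_huber {δ : ℝ} (hδ : 0 ≤ δ) : ConvexOn ℝ Set.univ (huber δ) := by
  refine convexOn_univ_of_forall_exists_subgradient fun x => ?_
  set s := max (-δ) (min x δ)
  have hs : |s| ≤ δ := abs_le.2 ⟨le_max_left _ _, max_le (by linarith) (min_le_right _ _)⟩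
  refine ⟨LinearMap.mulLeft ℝ s, fun z => ?_⟩
  rw [huber_eq_clamp_mul_sub hδ, LinearMap.mulLeft_apply]
  linarith [mul_sub_sq_div_two_le_huber hs z]

theorem Real.sqrt_mul_eq_mul_sqrt_div {a b : ℝ} (hb : 0 < b) : √(a * b) = b * √(a / b) := by
  rw [show a * b = b ^ 2 * (a / b) by field_simp, Real.sqrt_mul (sq_nonneg b), Real.sqrt_sq hb.le]

section PhiBar

variable {mu d : ℝ} (hmu : 0 ≤ mu) (hd0 : 0 < d) (hd2 : d < 1 / 2)
include hmu hd0 hd2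

theorem phiBar_add_sq_eq (r : ℝ) :
    phiBar mu d r + d / (1 - 2 * d) * r ^ 2 =
      (1 - 2 * d)⁻¹ * (huber (2 * d * √(mu / d)) r + d * max (|r| - √(mu / d)) 0 ^ 2) := by
  have he : 1 - 2 * d ≠ 0 := by linarith
  have hsqrt := Real.sqrt_mul_eq_mul_sqrt_div (a := mu) hd0
  set t := √(mu / d) with ht
  have hmu_eq : mu = d * t ^ 2 := by
    rw [ht, Real.sq_sqrt (div_nonneg hmu hd0.le)]; field_simp
  have hδt : 2 * d * t ≤ t := by nlinarith [Real.sqrt_nonneg (mu / d)]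
  unfold phiBar huber
  rw [hsqrt, ← ht, ← sq_abs r, hmu_eq, eq_inv_mul_iff_mul_eq₀ he]
  by_cases h1 : |r| ≤ 2 * d * t
  · rw [if_pos (by linarith), if_pos h1, max_eq_right (by linarith)]
    field_simp; ring
  rw [if_neg (by linarith), if_neg h1]
  by_cases h2 : |r| < t
  · rw [if_pos h2, max_eq_right (by linarith)]
    field_simp; ring
  · rw [if_neg h2, max_eq_left (by linarith)]
    field_simp; ring

theorem convexOn_phiBar_add_sq :
    ConvexOn ℝ Set.univ fun r => phiBar mu d r + d / (1 - 2 * d) * r ^ 2 := by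
  set t := √(mu / d)
  have hhinge : ConvexOn ℝ Set.univ fun r : ℝ => max (|r| - t) 0 ^ 2 := by
    have h := ((convexOn_norm (E := ℝ) convex_univ).add_const (-t)).sup
      (convexOn_const 0 convex_univ)
    refine (h.pow (fun _ _ => le_max_right _ _) 2).congr fun r _ => ?_
    simp [Real.norm_eq_abs, sub_eq_add_neg]
  have h := ((convexOn_huber (by positivity : 0 ≤ 2 * d * t)).add
    (hhinge.smul hd0.le)).smul (inv_nonneg.2 (by linarith : (0:ℝ) ≤ 1 - 2 * d))
  refine h.congr fun r _ => ?_
  simp only [smul_eq_mul, Pi.add_apply]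
  rw [phiBar_add_sq_eq hmu hd0 hd2]

theorem convexOn_phiBar_sub_add_sq (y : ℝ) :
    ConvexOn ℝ Set.univ fun w => phiBar mu d (y - w) + d / (1 - 2 * d) * w ^ 2 := by
  have h1 := (convexOn_phiBar_add_sq hmu hd0 hd2).comp_affineMap
    (AffineMap.const ℝ ℝ y - AffineMap.id ℝ ℝ)
  have h2 := ((LinearMap.mulLeft ℝ (2 * (d / (1 - 2 * d)) * y)).convexOn convex_univ).add_const
    (-(d / (1 - 2 * d) * y ^ 2))
  refine (h1.add h2).congr fun w _ => ?_
  simp only [Function.comp_apply, AffineMap.coe_sub, AffineMap.coe_const, AffineMap.coe_id,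
    Pi.sub_apply, Function.const_apply, id_eq, Pi.add_apply, LinearMap.mulLeft_apply]
  ring

end PhiBar

section Schur

variable {n p : Type*} [Fintype n] [Fintype p] [DecidableEq n]

theorem dotProduct_mulVec_transpose_mul_diagonal_mul (X : Matrix n p ℝ) (e : n → ℝ)
    (v : p → ℝ) : v ⬝ᵥ (Xᵀ * diagonal e * X) *ᵥ v = ∑ i, e i * (X *ᵥ v) i ^ 2 := by
  rw [← mulVec_mulVec, ← mulVec_mulVec, dotProduct_mulVec, vecMul_transpose]
  simp only [dotProduct, mulVec_diagonal]
  exact Finset.sum_congr rfl fun i _ => by ring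

theorem dotProduct_mulVec_schurComplement [DecidableEq p] (X : Matrix n p ℝ) (lam : ℝ)
    {d : n → ℝ} (hd : ∀ i, 1 - 2 * d i ≠ 0) (v : p → ℝ) :
    v ⬝ᵥ (Xᵀ * X + lam • 1 - -Xᵀ * (diagonal fun i => 1 - 2 * d i)⁻¹ * (-Xᵀ)ᴴ) *ᵥ v =
      lam * ∑ j, v j ^ 2 - 2 * ∑ i, d i / (1 - 2 * d i) * (X *ᵥ v) i ^ 2 := by
  have hinv : (diagonal fun i => 1 - 2 * d i)⁻¹ = diagonal fun i => (1 - 2 * d i)⁻¹ :=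
    inv_eq_left_inv <| by
      rw [diagonal_mul_diagonal, ← diagonal_one]
      exact congrArg diagonal (funext fun i => inv_mul_cancel₀ (hd i))
  have hX : Xᵀ * X = Xᵀ * diagonal (fun _ : n => (1 : ℝ)) * X := by
    rw [diagonal_one, Matrix.mul_one]
  have hlam : v ⬝ᵥ (lam • 1 : Matrix p p ℝ) *ᵥ v = lam * ∑ j, v j ^ 2 := by
    simp [dotProduct, smul_mulVec, Finset.mul_sum, sq, mul_left_comm]
  simp only [hinv, conjTranspose_eq_transpose_of_trivial, transpose_neg, transpose_transpose,
    Matrix.neg_mul, Matrix.mul_neg, neg_neg]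
  rw [hX, sub_mulVec, add_mulVec, dotProduct_sub, dotProduct_add, hlam,
    dotProduct_mulVec_transpose_mul_diagonal_mul, dotProduct_mulVec_transpose_mul_diagonal_mul,
    add_sub_right_comm, ← Finset.sum_sub_distrib]
  have hterm : ∀ i, 1 * (X *ᵥ v) i ^ 2 - (1 - 2 * d i)⁻¹ * (X *ᵥ v) i ^ 2 =
      -(2 * (d i / (1 - 2 * d i) * (X *ᵥ v) i ^ 2)) := fun i => by
    field_simp [hd i]; ring
  rw [Finset.sum_congr rfl fun i _ => hterm i, Finset.sum_neg_distrib, ← Finset.mul_sum]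
  ring

theorem convexOn_sub_sum_sq_of_posSemidef_fromBlocks [DecidableEq p] (X : Matrix n p ℝ)
    (lam : ℝ) {d : n → ℝ} (hd : ∀ i, d i < 1 / 2)
    (hpsd : (fromBlocks (Xᵀ * X + lam • 1) (-Xᵀ) (-X) (1 - (2 : ℝ) • diagonal d)).PosSemidef) :
    ConvexOn ℝ Set.univ fun β : p → ℝ =>
      lam / 2 * ∑ j, β j ^ 2 - ∑ i, d i / (1 - 2 * d i) * (X *ᵥ β) i ^ 2 := by
  have he : ∀ i, 0 < 1 - 2 * d i := fun i => by linarith [hd i]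
  have hD : (diagonal fun i => 1 - 2 * d i).PosDef := posDef_diagonal_iff.2 he
  let := hD.isUnit.invertible
  have hdiag : (1 : Matrix n n ℝ) - (2 : ℝ) • diagonal d = diagonal fun i => 1 - 2 * d i := by
    ext i j; by_cases h : i = j <;> simp [h, one_apply]
  have hS := (hD.fromBlocks₂₂ (Xᵀ * X + lam • 1) (-Xᵀ)).1 (by simpa [← hdiag] using hpsd)
  refine (hS.convexOn_dotProduct_mulVec.smul (by norm_num : (0 : ℝ) ≤ 1 / 2)).congr
    fun β _ => ?_
  dsimp only
  rw [smul_eq_mul, dotProduct_mulVec_schurComplement X lam (fun i => (he i).ne') β]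
  ring

end Schur

theorem stmt_5 (n p : ℕ) (X : Matrix (Fin n) (Fin p) ℝ) (y : Fin n → ℝ)
    (lam mu : ℝ) (hmu : 0 < mu)
    (d : Fin n → ℝ) (hd : ∀ i, 0 < d i ∧ d i < 1/2)
    (hpsd : (Matrix.fromBlocks (Xᵀ * X + lam • (1 : Matrix (Fin p) (Fin p) ℝ))
      (-Xᵀ) (-X)
      ((1 : Matrix (Fin n) (Fin n) ℝ) - (2:ℝ) • Matrix.diagonal d)).PosSemidef) :
    ConvexOn ℝ Set.univ
      (fun β : Fin p → ℝ =>
        lam/2 * ∑ j, (β j)^2 + ∑ i, phiBar mu (d i) (y i - ∑ j, X i j * β j)) := by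
  have hquad := convexOn_sub_sum_sq_of_posSemidef_fromBlocks X lam (fun i => (hd i).2) hpsd
  have hloss := ConvexOn.fun_sum convex_univ Finset.univ fun i _ =>
    (convexOn_phiBar_sub_add_sq hmu.le (hd i).1 (hd i).2 (y i)).comp_linearMap
      ((LinearMap.proj i).comp (mulVecLin X))
  refine (hquad.add hloss).congr fun β _ => ?_
  simp only [Pi.add_apply, Function.comp_apply, LinearMap.coe_comp, LinearMap.coe_proj,
    mulVecLin_apply, Function.eval, Finset.sum_add_distrib, mulVec, dotProduct]
  ring
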